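/- Let A be a unital C*-algebra and (z_k) a sequence in the standard module l₂(A) such that z_k lies in the free submodule N_k, where l₂(A) = N₁ ⊕ N₂ ⊕ ... is a decomposition into free modules generated by consecutive standard basis vectors, ‖z_k‖ ≤ 1 + ε/2^k, and (b_k) is a sequence in A with partial sums of Σ b_k* b_k uniformly bounded. Then β(x) = Σ_k b_k* ⟨z_k, x⟩ defines a bounded A-linear functional on l₂(A). -/

import Mathlib

/-- Membership in the standard Hilbert module `H_A = l₂(A)`: the series `∑ xᵢ* xᵢ`
converges in norm. -/
def MemHA {A : Type} [CStarAlgebra A] (x : ℕ → A) : Prop :=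
  Summable fun i => star (x i) * x i

/-- The Hilbert module norm on `H_A`: `‖x‖ = ‖∑ xᵢ* xᵢ‖^{1/2}`. -/
noncomputable def HAnorm {A : Type} [CStarAlgebra A] (x : ℕ → A) : ℝ :=
  Real.sqrt ‖∑' i, star (x i) * x i‖

/-- A bounded `A`-linear functional on the standard Hilbert module `H_A`. -/
def IsBddAFunctional {A : Type} [CStarAlgebra A] (φ : (ℕ → A) → A) : Prop :=
  (∀ x y : ℕ → A, MemHA x → MemHA y → φ (x + y) = φ x + φ y) ∧
  (∀ (x : ℕ → A) (a : A), MemHA x → φ (fun i => x i * a) = φ x * a) ∧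
  (∃ C : ℝ, ∀ x : ℕ → A, MemHA x → ‖φ x‖ ≤ C * HAnorm x)

/-!
Regrouped over the pairs `(k, i)` with `i ∈ N_k`, a partial sum of `β(x)` is
`∑ (z_k i b_k)* x_i`, so Cauchy–Schwarz in `A^n` bounds it by
`‖∑ b_k* ⟨z_k, z_k⟩ b_k‖^{1/2} ‖∑ x_i* x_i‖^{1/2} ≤ (R C)^{1/2} ‖x‖`, where `‖z_k‖² ≤ R` and `C`
bounds the partial sums of `∑ b_k* b_k`. As the blocks are disjoint and eventually lie beyond any
finite set of coordinates, the same estimate gives the Cauchy criterion for the series; additivity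
and `A`-linearity pass to the sum.
-/

open scoped InnerProductSpace WithCStarModule

section StarOrdered

variable {A : Type*} [NonUnitalCStarAlgebra A] [PartialOrder A] [StarOrderedRing A] {ι : Type*}

theorem norm_sum_star_mul_le (s : Finset ι) (u v : ι → A) :
    ‖∑ i ∈ s, star (u i) * v i‖ ≤
      √‖∑ i ∈ s, star (u i) * u i‖ * √‖∑ i ∈ s, star (v i) * v i‖ := by
  -- Cauchy–Schwarz in the C⋆-module `A^s`, where `⟪U, V⟫ = ∑ i, V i * star (U i)`.
  let U : C⋆ᵐᵒᵈ(A, s → A) := (WithCStarModule.equiv _ _).symm fun i => star (v i)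
  let V : C⋆ᵐᵒᵈ(A, s → A) := (WithCStarModule.equiv _ _).symm fun i => star (u i)
  have hUV : ⟪U, V⟫_A = ∑ i ∈ s, star (u i) * v i := by
    rw [WithCStarModule.pi_inner, ← Finset.sum_coe_sort s]
    simp [WithCStarModule.inner_def, U, V]
  have hU : ‖U‖ = √‖∑ i ∈ s, star (v i) * v i‖ := by
    rw [WithCStarModule.pi_norm, ← Finset.sum_coe_sort s]
    simp [WithCStarModule.inner_def, U]
  have hV : ‖V‖ = √‖∑ i ∈ s, star (u i) * u i‖ := by
    rw [WithCStarModule.pi_norm, ← Finset.sum_coe_sort s]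
    simp [WithCStarModule.inner_def, V]
  rw [← hUV, ← hU, ← hV, mul_comm]
  exact CStarModule.norm_inner_le _

theorem norm_sum_star_mul_self_le_of_subset {s t : Finset ι} (hst : s ⊆ t) (u : ι → A) :
    ‖∑ i ∈ s, star (u i) * u i‖ ≤ ‖∑ i ∈ t, star (u i) * u i‖ :=
  CStarAlgebra.norm_le_norm_of_nonneg_of_le (Finset.sum_nonneg fun _ _ => star_mul_self_nonneg _)
    (Finset.sum_le_sum_of_subset_of_nonneg hst fun _ _ _ => star_mul_self_nonneg _)

theorem norm_sum_star_mul_self_le_tsum {u : ι → A} (hu : Summable fun i => star (u i) * u i)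
    (s : Finset ι) : ‖∑ i ∈ s, star (u i) * u i‖ ≤ ‖∑' i, star (u i) * u i‖ :=
  CStarAlgebra.norm_le_norm_of_nonneg_of_le (Finset.sum_nonneg fun _ _ => star_mul_self_nonneg _)
    (hu.sum_le_tsum s fun _ _ => star_mul_self_nonneg _)

end StarOrdered

theorem norm_sum_star_mul_mul_le {A : Type*} [CStarAlgebra A] [PartialOrder A]
    [StarOrderedRing A] {ι : Type*} (s : Finset ι) (b S : ι → A) {M : ℝ} (hM0 : 0 ≤ M)
    (hS : ∀ i ∈ s, 0 ≤ S i) (hSM : ∀ i ∈ s, ‖S i‖ ≤ M) :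
    ‖∑ i ∈ s, star (b i) * S i * b i‖ ≤ M * ‖∑ i ∈ s, star (b i) * b i‖ := by
  have hle : ∑ i ∈ s, star (b i) * S i * b i ≤ M • ∑ i ∈ s, star (b i) * b i := by
    rw [Finset.smul_sum]
    refine Finset.sum_le_sum fun i hi => ?_
    calc star (b i) * S i * b i ≤ star (b i) * algebraMap ℝ A M * b i :=
          star_left_conjugate_le_conjugate
            ((CStarAlgebra.norm_le_iff_le_algebraMap _ hM0 (hS i hi)).mp (hSM i hi)) _
      _ = M • (star (b i) * b i) := by
          rw [Algebra.algebraMap_eq_smul_one, mul_smul_comm, mul_one, smul_mul_assoc]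
  calc ‖∑ i ∈ s, star (b i) * S i * b i‖ ≤ ‖M • ∑ i ∈ s, star (b i) * b i‖ :=
        CStarAlgebra.norm_le_norm_of_nonneg_of_le
          (Finset.sum_nonneg fun i hi => star_left_conjugate_nonneg (hS i hi) _) hle
    _ = M * ‖∑ i ∈ s, star (b i) * b i‖ := by rw [norm_smul, Real.norm_of_nonneg hM0]

theorem HAnorm_sq_eq_norm_sum_of_notMem {A : Type} [CStarAlgebra A] {w : ℕ → A} (s : Finset ℕ)
    (hw : ∀ i ∉ s, w i = 0) : HAnorm w ^ 2 = ‖∑ i ∈ s, star (w i) * w i‖ := by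
  rw [HAnorm, Real.sq_sqrt (norm_nonneg _), tsum_eq_sum fun i hi => by simp [hw i hi]]

section Blocks

attribute [local instance] CStarAlgebra.spectralOrder CStarAlgebra.spectralOrderedRing

variable {A : Type} [CStarAlgebra A] (ν : ℕ → ℕ) (z : ℕ → ℕ → A) (b : ℕ → A)

/-- `b_k* ⟨z_k, x⟩`, where `N_k` is spanned by the basis vectors with indices in
`[ν k, ν (k + 1))`. -/
def blockTerm (x : ℕ → A) (k : ℕ) : A :=
  star (b k) * ∑ i ∈ Finset.Ico (ν k) (ν (k + 1)), star (z k i) * x i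

variable {ν z b} {R C : ℝ} (hR : 0 ≤ R)
  (hz : ∀ k, ‖∑ i ∈ Finset.Ico (ν k) (ν (k + 1)), star (z k i) * z k i‖ ≤ R)
  (hb : ∀ N, ‖∑ k ∈ Finset.range N, star (b k) * b k‖ ≤ C)
include hR hz hb

theorem norm_sum_blockTerm_le (hν : Monotone ν) (x : ℕ → A) (F : Finset ℕ) :
    ‖∑ k ∈ F, blockTerm ν z b x k‖ ≤
      √(R * C) * √‖∑ i ∈ F.biUnion fun k => Finset.Ico (ν k) (ν (k + 1)), star (x i) * x i‖ := by
  set B : ℕ → Finset ℕ := fun k => Finset.Ico (ν k) (ν (k + 1)) with hB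
  have hterm : ∑ k ∈ F, blockTerm ν z b x k =
      ∑ p ∈ F.sigma B, star (z p.1 p.2 * b p.1) * x p.2 := by
    simp only [Finset.sum_sigma, blockTerm, Finset.mul_sum, star_mul, mul_assoc, hB]
  have hzb : ∑ p ∈ F.sigma B, star (z p.1 p.2 * b p.1) * (z p.1 p.2 * b p.1) =
      ∑ k ∈ F, star (b k) * (∑ i ∈ B k, star (z k i) * z k i) * b k := by
    simp only [Finset.sum_sigma, Finset.mul_sum, Finset.sum_mul, star_mul, mul_assoc]
  have hdisj : (F : Set ℕ).PairwiseDisjoint B := fun k _ l _ hkl => by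
    change Disjoint (B k) (B l)
    rw [← Finset.disjoint_coe]
    simpa [hB] using hν.pairwise_disjoint_on_Ico_succ hkl
  have hx : ∑ p ∈ F.sigma B, star (x p.2) * x p.2 = ∑ i ∈ F.biUnion B, star (x i) * x i := by
    rw [Finset.sum_sigma, Finset.sum_biUnion hdisj]
  have hbF : ‖∑ k ∈ F, star (b k) * b k‖ ≤ C := by
    obtain ⟨N, hN⟩ := F.exists_nat_subset_range
    exact (norm_sum_star_mul_self_le_of_subset hN b).trans (hb N)
  have hzbF : ‖∑ k ∈ F, star (b k) * (∑ i ∈ B k, star (z k i) * z k i) * b k‖ ≤ R * C :=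
    (norm_sum_star_mul_mul_le F b _ hR (fun k _ => Finset.sum_nonneg fun i _ =>
      star_mul_self_nonneg _) fun k _ => hz k).trans (mul_le_mul_of_nonneg_left hbF hR)
  rw [hterm, ← hx]
  refine (norm_sum_star_mul_le _ _ _).trans (mul_le_mul_of_nonneg_right ?_ (Real.sqrt_nonneg _))
  rw [hzb]
  exact Real.sqrt_le_sqrt hzbF

theorem summable_blockTerm (hν : StrictMono ν) {x : ℕ → A} (hx : MemHA x) :
    Summable (blockTerm ν z b x) := by
  rw [summable_iff_vanishing_norm]
  intro ε hε
  set K := √(R * C)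
  obtain ⟨s, hs⟩ := summable_iff_vanishing_norm.mp hx ((ε / (K + 1)) ^ 2) (by positivity)
  obtain ⟨N, hN⟩ := s.exists_nat_subset_range
  refine ⟨Finset.range N, fun t ht => ?_⟩
  -- Blocks with index `k ≥ N` only meet coordinates `i ≥ ν k ≥ k ≥ N`.
  have hts : Disjoint (t.biUnion fun k => Finset.Ico (ν k) (ν (k + 1))) s := by
    refine Finset.disjoint_left.mpr fun i hi his => ?_
    obtain ⟨k, hkt, hik⟩ := Finset.mem_biUnion.mp hi
    have hkN : N ≤ k := by simpa using Finset.disjoint_left.mp ht hkt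
    have hiN : i < N := Finset.mem_range.mp (hN his)
    have hkν : k ≤ ν k := hν.le_apply
    have hνi : ν k ≤ i := (Finset.mem_Ico.mp hik).1
    omega
  have hsmall : √‖∑ i ∈ t.biUnion fun k => Finset.Ico (ν k) (ν (k + 1)), star (x i) * x i‖ ≤
      ε / (K + 1) :=
    Real.sqrt_le_iff.mpr ⟨by positivity, (hs _ hts).le⟩
  calc ‖∑ k ∈ t, blockTerm ν z b x k‖ ≤ K * (ε / (K + 1)) :=
        (norm_sum_blockTerm_le hR hz hb hν.monotone x t).trans
          (mul_le_mul_of_nonneg_left hsmall (Real.sqrt_nonneg _))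
    _ < ε := by
        rw [mul_div_assoc', div_lt_iff₀ (by positivity)]
        nlinarith

theorem norm_tsum_blockTerm_le (hν : StrictMono ν) {x : ℕ → A} (hx : MemHA x) :
    ‖∑' k, blockTerm ν z b x k‖ ≤ √(R * C) * HAnorm x :=
  le_of_tendsto' (summable_blockTerm hR hz hb hν hx).hasSum.norm fun F =>
    (norm_sum_blockTerm_le hR hz hb hν.monotone x F).trans
      (mul_le_mul_of_nonneg_left (Real.sqrt_le_sqrt (norm_sum_star_mul_self_le_tsum hx _))
        (Real.sqrt_nonneg _))

theorem isBddAFunctional_tsum_blockTerm (hν : StrictMono ν) :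
    IsBddAFunctional fun x => ∑' k, blockTerm ν z b x k := by
  refine ⟨fun x y hx hy => ?_, fun x a hx => ?_,
    √(R * C), fun x hx => norm_tsum_blockTerm_le hR hz hb hν hx⟩
  · have hadd : blockTerm ν z b (x + y) = blockTerm ν z b x + blockTerm ν z b y := by
      ext k
      simp [blockTerm, mul_add, Finset.sum_add_distrib]
    beta_reduce
    rw [hadd]
    exact (summable_blockTerm hR hz hb hν hx).tsum_add (summable_blockTerm hR hz hb hν hy)
  · have hmul : blockTerm ν z b (fun i => x i * a) = fun k => blockTerm ν z b x k * a := by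
      ext k
      simp [blockTerm, Finset.mul_sum, Finset.sum_mul, mul_assoc]
    beta_reduce
    rw [hmul, (summable_blockTerm hR hz hb hν hx).tsum_mul_right]

end Blocks

theorem stmt11_general {A : Type} [CStarAlgebra A]
    (ν : ℕ → ℕ) (hν_mono : StrictMono ν)
    (ε : ℝ)
    (z : ℕ → ℕ → A)
    (hz_supp : ∀ k i : ℕ, (i < ν k ∨ ν (k + 1) ≤ i) → z k i = 0)
    (hz_norm : ∀ k : ℕ, HAnorm (z k) ≤ 1 + ε / 2 ^ k)
    (b : ℕ → A) (hb : ∃ C : ℝ, ∀ N : ℕ, ‖∑ k ∈ Finset.range N, star (b k) * b k‖ ≤ C) :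
    ∃ β : (ℕ → A) → A, IsBddAFunctional β ∧
      ∀ x : ℕ → A, MemHA x →
        HasSum (fun k => star (b k) *
          ∑ i ∈ Finset.Ico (ν k) (ν (k + 1)), star (z k i) * x i) (β x) := by
  obtain ⟨C, hC⟩ := hb
  have hz : ∀ k, ‖∑ i ∈ Finset.Ico (ν k) (ν (k + 1)), star (z k i) * z k i‖ ≤ (1 + |ε|) ^ 2 := by
    intro k
    rw [← HAnorm_sq_eq_norm_sum_of_notMem _ fun i hi => hz_supp k i (by simp at hi; omega)]
    have hεk : ε / 2 ^ k ≤ |ε| :=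
      (div_le_div_of_nonneg_right (le_abs_self ε) (by positivity)).trans
        (div_le_self (abs_nonneg ε) (one_le_pow₀ one_le_two))
    exact pow_le_pow_left₀ (Real.sqrt_nonneg _) ((hz_norm k).trans (by linarith)) 2
  exact ⟨_, isBddAFunctional_tsum_blockTerm (by positivity) hz hC hν_mono,
    fun x hx => (summable_blockTerm (by positivity) hz hC hν_mono hx).hasSum⟩

/-- Let `l₂(A) = N₁ ⊕ N₂ ⊕ ⋯` be a decomposition into free submodules
generated by consecutive standard basis vectors (blocks `[ν k, ν (k+1))` of the index set),
let `z k ∈ N_k` with `‖z k‖ ≤ 1 + ε/2^k`, and let `(b k)` have uniformly bounded partial sums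
of `∑ bₖ* bₖ`. Then `β(x) = ∑ₖ bₖ* ⟨zₖ, x⟩` defines a bounded `A`-linear functional
on `l₂(A)`. -/
theorem stmt11 {A : Type} [CStarAlgebra A]
    (ν : ℕ → ℕ) (hν_mono : StrictMono ν) (hν0 : ν 0 = 0)
    (ε : ℝ) (hε : 0 < ε)
    (z : ℕ → ℕ → A)
    (hz_supp : ∀ k i : ℕ, (i < ν k ∨ ν (k + 1) ≤ i) → z k i = 0)
    (hz_norm : ∀ k : ℕ, HAnorm (z k) ≤ 1 + ε / 2 ^ k)
    (b : ℕ → A) (hb : ∃ C : ℝ, ∀ N : ℕ, ‖∑ k ∈ Finset.range N, star (b k) * b k‖ ≤ C) :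
    ∃ β : (ℕ → A) → A, IsBddAFunctional β ∧
      ∀ x : ℕ → A, MemHA x →
        HasSum (fun k => star (b k) *
          ∑ i ∈ Finset.Ico (ν k) (ν (k + 1)), star (z k i) * x i) (β x) :=
  stmt11_general ν hν_mono ε z hz_supp hz_norm b hb
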